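/- Let A be an orthomodular lattice, F(A) its filter space with orthogonality x ⊥_A y iff ∃a (a ∈ x ∧ -a ∈ y), and for U ⊆ F(A) let U^⊥ = {x : ∀y ∈ U, x ⊥_A y}. Then for every a ∈ A, h(-a) = h(a)^⊥, where h(a) = {x ∈ F(A) : a ∈ x}. -/

import Mathlib

def IsFilter {α : Type*} [Lattice α] (F : Set α) : Prop :=
  F.Nonempty ∧ (∀ a b : α, a ∈ F → a ≤ b → b ∈ F) ∧
    (∀ a b : α, a ∈ F → b ∈ F → a ⊓ b ∈ F)

theorem isFilter_Ici {α : Type*} [Lattice α] (a : α) : IsFilter (Set.Ici a) :=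
  ⟨⟨a, le_rfl⟩, fun _ _ hb hbc => le_trans hb hbc, fun _ _ hb hc => le_inf hb hc⟩

theorem le_oc_of_le_oc {α : Type*} [Preorder α] {oc : α → α}
    (h_anti : ∀ a b : α, a ≤ b → oc b ≤ oc a) (h_inv : ∀ a : α, oc (oc a) = a)
    {a b : α} (h : a ≤ oc b) : b ≤ oc a := by
  simpa only [h_inv] using h_anti a (oc b) h

theorem canonical_map_compl_general {α : Type*} [Lattice α]
    (oc : α → α)
    (h_anti : ∀ a b : α, a ≤ b → oc b ≤ oc a)
    (h_inv : ∀ a : α, oc (oc a) = a) :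
    ∀ a : α, {x : Set α | IsFilter x ∧ oc a ∈ x} =
      {x : Set α | IsFilter x ∧
        ∀ y ∈ {y : Set α | IsFilter y ∧ a ∈ y}, ∃ b : α, b ∈ x ∧ oc b ∈ y} := by
  intro a
  ext x
  constructor
  · rintro ⟨hx, hoca⟩
    exact ⟨hx, fun y ⟨_, hay⟩ => ⟨oc a, hoca, (h_inv a).symm ▸ hay⟩⟩
  · rintro ⟨hx, h_orth⟩
    obtain ⟨b, hbx, hab⟩ := h_orth (Set.Ici a) ⟨isFilter_Ici a, le_rfl⟩
    exact ⟨hx, hx.2.1 b (oc a) hbx (le_oc_of_le_oc h_anti h_inv hab)⟩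

/-- For every `a` in an orthomodular lattice, `h(-a) = h(a)^⊥`, where
    `h(a) = {x ∈ F(A) : a ∈ x}`, `x ⊥_A y ↔ ∃ b, b ∈ x ∧ -b ∈ y`, and
    `U^⊥ = {x ∈ F(A) : ∀ y ∈ U, x ⊥_A y}`. -/
theorem canonical_map_compl {α : Type*} [Lattice α] [BoundedOrder α]
    (oc : α → α)
    (h_inf : ∀ a : α, a ⊓ oc a = ⊥)
    (h_sup : ∀ a : α, a ⊔ oc a = ⊤)
    (h_anti : ∀ a b : α, a ≤ b → oc b ≤ oc a)
    (h_inv : ∀ a : α, oc (oc a) = a)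
    (h_om : ∀ a b : α, a ≤ b → b = a ⊔ (oc a ⊓ b)) :
    ∀ a : α, {x : Set α | IsFilter x ∧ oc a ∈ x} =
      {x : Set α | IsFilter x ∧
        ∀ y ∈ {y : Set α | IsFilter y ∧ a ∈ y}, ∃ b : α, b ∈ x ∧ oc b ∈ y} :=
  canonical_map_compl_general oc h_anti h_inv
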